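/- arXiv:1503.04856 — 6 statements merged into one kernel-verified Lean document; each statement's English description precedes it below -/
import Mathlib

section
/- Let H be a complex Hilbert space, let {φ_n}_{n≥0} be a sequence of unit vectors in H, and let {g_n}_{n≥0} be the Kaczmarz auxiliary sequence defined by g_0 = φ_0 and g_n = φ_n − Σ_{i=0}^{n−1} ⟨φ_n, φ_i⟩ g_i. For x ∈ H, define the Kaczmarz iterates x_0 = ⟨x, φ_0⟩φ_0 and x_n = x_{n−1} + ⟨x − x_{n−1}, φ_n⟩φ_n for n ≥ 1. Then for every n ∈ ℕ, x_n = Σ_{i=0}^{n} ⟨x, g_i⟩ φ_i. -/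
section Kaczmarz

variable {𝕜 E : Type*} [RCLike 𝕜] [SeminormedAddCommGroup E] [InnerProductSpace 𝕜 E]

theorem inner_sub_sum_inner_smul_eq_inner_succ (φ g : ℕ → E) (x : E) (n : ℕ)
    (hg : g (n + 1) = φ (n + 1) - ∑ i ∈ Finset.range (n + 1), inner 𝕜 (φ i) (φ (n + 1)) • g i) :
    inner 𝕜 (φ (n + 1)) (x - ∑ i ∈ Finset.range (n + 1), inner 𝕜 (g i) x • φ i) =
      inner 𝕜 (g (n + 1)) x := by
  rw [hg, inner_sub_left, inner_sub_right, inner_sum, sum_inner]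
  congr 1
  refine Finset.sum_congr rfl fun i _ => ?_
  rw [inner_smul_right, inner_smul_left, inner_conj_symm, mul_comm]

end Kaczmarz

theorem kaczmarz_iterates_formula_general
    {H : Type*} [NormedAddCommGroup H] [InnerProductSpace ℂ H]
    (φ : ℕ → H)
    (g : ℕ → H)
    (hg0 : g 0 = φ 0)
    (hg : ∀ n : ℕ, g (n + 1) =
      φ (n + 1) - ∑ i ∈ Finset.range (n + 1), (inner ℂ (φ i) (φ (n + 1)) : ℂ) • g i)
    (x : H) (X : ℕ → H)
    (hX0 : X 0 = (inner ℂ (φ 0) x : ℂ) • φ 0)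
    (hX : ∀ n : ℕ, X (n + 1) = X n + (inner ℂ (φ (n + 1)) (x - X n) : ℂ) • φ (n + 1)) :
    ∀ n : ℕ, X n = ∑ i ∈ Finset.range (n + 1), (inner ℂ (g i) x : ℂ) • φ i := by
  intro n
  induction n with
  | zero => simpa [hg0] using hX0
  | succ n ih =>
    rw [hX n, ih, inner_sub_sum_inner_smul_eq_inner_succ φ g x n (hg n),
      Finset.sum_range_succ _ (n + 1)]

/-- In a complex Hilbert space `H`, let `{φ_n}` be unit vectors with Kaczmarz
auxiliary sequence `g_0 = φ_0`, `g_n = φ_n - Σ_{i<n} ⟨φ_n, φ_i⟩ g_i`, and for `x ∈ H` let the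
Kaczmarz iterates be `x_0 = ⟨x, φ_0⟩ φ_0`, `x_n = x_{n-1} + ⟨x - x_{n-1}, φ_n⟩ φ_n`.
Then `x_n = Σ_{i=0}^n ⟨x, g_i⟩ φ_i` for every `n`.
(Here `⟨u, v⟩` denotes the inner product linear in the first slot, i.e. `inner v u` in Mathlib.) -/
theorem kaczmarz_iterates_formula
    {H : Type*} [NormedAddCommGroup H] [InnerProductSpace ℂ H] [CompleteSpace H]
    (φ : ℕ → H) (hφ : ∀ n, ‖φ n‖ = 1)
    (g : ℕ → H)
    (hg0 : g 0 = φ 0)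
    (hg : ∀ n : ℕ, g (n + 1) =
      φ (n + 1) - ∑ i ∈ Finset.range (n + 1), (inner ℂ (φ i) (φ (n + 1)) : ℂ) • g i)
    (x : H) (X : ℕ → H)
    (hX0 : X 0 = (inner ℂ (φ 0) x : ℂ) • φ 0)
    (hX : ∀ n : ℕ, X (n + 1) = X n + (inner ℂ (φ (n + 1)) (x - X n) : ℂ) • φ (n + 1)) :
    ∀ n : ℕ, X n = ∑ i ∈ Finset.range (n + 1), (inner ℂ (g i) x : ℂ) • φ i :=
  kaczmarz_iterates_formula_general φ g hg0 hg x X hX0 hX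
end

section
/- Let H be a complex Hilbert space and let {φ_n}_{n≥0} be a sequence of unit vectors in H that is effective, i.e., for every x ∈ H the Kaczmarz iterates x_0 = ⟨x, φ_0⟩φ_0, x_n = x_{n−1} + ⟨x − x_{n−1}, φ_n⟩φ_n converge to x in norm. Let {g_n}_{n≥0} be the Kaczmarz auxiliary sequence of {φ_n}. Then {φ_n} and {g_n} form a pair of pseudoframes: for all x, y ∈ H, ⟨x, y⟩ = Σ_{n=0}^∞ ⟨x, g_n⟩⟨φ_n, y⟩. -/
/-!
If `x` is expanded as `xₙ = ∑_{i ≤ n} ⟨x, gᵢ⟩ φᵢ`, the defining recursion of the auxiliary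
sequence `g` says exactly that `⟨x, g_{n+1}⟩ = ⟨x - xₙ, φ_{n+1}⟩`, i.e. `(xₙ)` are the Kaczmarz
iterates of `x`. Effectiveness gives `xₙ → x`, and pairing with `y` turns this into the
pseudoframe expansion of `⟨x, y⟩`.
-/

open Filter Finset

section Kaczmarz

variable {𝕜 E : Type*} [RCLike 𝕜] [NormedAddCommGroup E] [InnerProductSpace 𝕜 E]

theorem inner_kaczmarzAux_succ {φ g : ℕ → E}
    (hg : ∀ n : ℕ, g (n + 1) =
      φ (n + 1) - ∑ i ∈ range (n + 1), (inner 𝕜 (φ i) (φ (n + 1)) : 𝕜) • g i)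
    (x : E) (n : ℕ) :
    inner 𝕜 (g (n + 1)) x =
      inner 𝕜 (φ (n + 1)) (x - ∑ i ∈ range (n + 1), inner 𝕜 (g i) x • φ i) := by
  rw [hg n]
  simp only [inner_sub_left, inner_sub_right, sum_inner, inner_sum, inner_smul_left,
    inner_smul_right, inner_conj_symm]
  congr 1
  exact sum_congr rfl fun i _ => mul_comm _ _

theorem kaczmarz_step_of_expansion {φ g : ℕ → E}
    (hg : ∀ n : ℕ, g (n + 1) =
      φ (n + 1) - ∑ i ∈ range (n + 1), (inner 𝕜 (φ i) (φ (n + 1)) : 𝕜) • g i)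
    (x : E) (n : ℕ) :
    ∑ i ∈ range (n + 2), inner 𝕜 (g i) x • φ i =
      ∑ i ∈ range (n + 1), inner 𝕜 (g i) x • φ i +
        inner 𝕜 (φ (n + 1)) (x - ∑ i ∈ range (n + 1), inner 𝕜 (g i) x • φ i) • φ (n + 1) := by
  rw [sum_range_succ _ (n + 1), inner_kaczmarzAux_succ hg]

end Kaczmarz

theorem effective_implies_pseudoframe_general
    {H : Type*} [NormedAddCommGroup H] [InnerProductSpace ℂ H]
    (φ : ℕ → H)
    (g : ℕ → H)
    (hg0 : g 0 = φ 0)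
    (hg : ∀ n : ℕ, g (n + 1) =
      φ (n + 1) - ∑ i ∈ Finset.range (n + 1), (inner ℂ (φ i) (φ (n + 1)) : ℂ) • g i)
    (heff : ∀ (x : H) (X : ℕ → H),
      X 0 = (inner ℂ (φ 0) x : ℂ) • φ 0 →
      (∀ n : ℕ, X (n + 1) = X n + (inner ℂ (φ (n + 1)) (x - X n) : ℂ) • φ (n + 1)) →
      Tendsto X atTop (nhds x)) :
    ∀ x y : H,
      Tendsto (fun N => ∑ n ∈ Finset.range N, (inner ℂ (g n) x : ℂ) * (inner ℂ y (φ n) : ℂ))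
        atTop (nhds (inner ℂ y x : ℂ)) := by
  intro x y
  set X : ℕ → H := fun n => ∑ i ∈ range (n + 1), inner ℂ (g i) x • φ i
  have hX : Tendsto X atTop (nhds x) :=
    heff x X (by simp [X, hg0]) (kaczmarz_step_of_expansion hg x)
  have hpair : Tendsto (fun n => inner ℂ y (X n)) atTop (nhds (inner ℂ y x)) :=
    tendsto_const_nhds.inner hX
  rw [← tendsto_add_atTop_iff_nat 1]
  simpa only [X, inner_sum, inner_smul_right, mul_comm] using hpair

/-- In a complex Hilbert space `H`, if the sequence of unit vectors `{φ_n}` is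
effective (for every `x`, the Kaczmarz iterates converge to `x` in norm) and `{g_n}` is its
Kaczmarz auxiliary sequence, then `{φ_n}` and `{g_n}` form a pair of pseudoframes:
`⟨x, y⟩ = Σ_{n=0}^∞ ⟨x, g_n⟩ ⟨φ_n, y⟩` for all `x, y ∈ H`, the series being the limit of
its partial sums.
(Here `⟨u, v⟩` denotes the inner product linear in the first slot, i.e. `inner v u` in Mathlib.) -/
theorem effective_implies_pseudoframe
    {H : Type*} [NormedAddCommGroup H] [InnerProductSpace ℂ H] [CompleteSpace H]
    (φ : ℕ → H) (hφ : ∀ n, ‖φ n‖ = 1)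
    (g : ℕ → H)
    (hg0 : g 0 = φ 0)
    (hg : ∀ n : ℕ, g (n + 1) =
      φ (n + 1) - ∑ i ∈ Finset.range (n + 1), (inner ℂ (φ i) (φ (n + 1)) : ℂ) • g i)
    (heff : ∀ (x : H) (X : ℕ → H),
      X 0 = (inner ℂ (φ 0) x : ℂ) • φ 0 →
      (∀ n : ℕ, X (n + 1) = X n + (inner ℂ (φ (n + 1)) (x - X n) : ℂ) • φ (n + 1)) →
      Tendsto X atTop (nhds x)) :
    ∀ x y : H,
      Tendsto (fun N => ∑ n ∈ Finset.range N, (inner ℂ (g n) x : ℂ) * (inner ℂ y (φ n) : ℂ))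
        atTop (nhds (inner ℂ y x : ℂ)) :=
  effective_implies_pseudoframe_general φ g hg0 hg heff
end

section
/- Let H be a complex Hilbert space, {φ_n}_{n≥0} a sequence of unit vectors in H with Kaczmarz auxiliary sequence {g_n}_{n≥0}, and for x ∈ H let {x_n} be the Kaczmarz iterates. Then the limit lim_{n→∞} ‖x − x_n‖² exists and ‖x‖² − lim_{n→∞} ‖x − x_n‖² = Σ_{n=0}^∞ |⟨x, g_n⟩|². -/
/-!
By induction the iterates are `x_n = Σ_{i ≤ n} ⟨x, g_i⟩ φ_i`, and the recursion for `g` turns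
this into `⟨x, g_{n+1}⟩ = ⟨x - x_n, φ_{n+1}⟩`. A Kaczmarz step removes exactly this component of
the residual `x - x_n` along the unit vector `φ_{n+1}`, so by Pythagoras
`‖x - x_{n+1}‖² = ‖x - x_n‖² - |⟨x, g_{n+1}⟩|²`. Hence `‖x - x_n‖² + Σ_{i ≤ n} |⟨x, g_i⟩|² = ‖x‖²`
for all `n`; as both summands are nonnegative, the series converges and the residuals tend to
`‖x‖²` minus its sum.
-/

open Filter Finset

section

variable {𝕜 E : Type*} [RCLike 𝕜] [NormedAddCommGroup E] [InnerProductSpace 𝕜 E]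

theorem norm_sub_inner_smul_sq_of_norm_eq_one (u : E) {v : E} (hv : ‖v‖ = 1) :
    ‖u - (inner 𝕜 v u : 𝕜) • v‖ ^ 2 = ‖u‖ ^ 2 - ‖(inner 𝕜 v u : 𝕜)‖ ^ 2 := by
  set c : 𝕜 := inner 𝕜 v u
  have hc : (inner 𝕜 u (c • v) : 𝕜) = c * (starRingEnd 𝕜) c := by
    rw [inner_smul_right, ← inner_conj_symm u v]
  rw [norm_sub_sq (𝕜 := 𝕜), hc, RCLike.mul_conj, norm_smul, hv, ← RCLike.ofReal_pow,
    RCLike.ofReal_re]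
  ring

theorem inner_kaczmarz_aux_succ (φ g : ℕ → E) (n : ℕ)
    (hg : g (n + 1) = φ (n + 1) - ∑ i ∈ range (n + 1), (inner 𝕜 (φ i) (φ (n + 1)) : 𝕜) • g i)
    (x : E) :
    (inner 𝕜 (g (n + 1)) x : 𝕜) =
      inner 𝕜 (φ (n + 1)) (x - ∑ i ∈ range (n + 1), (inner 𝕜 (g i) x : 𝕜) • φ i) := by
  rw [hg]
  simp only [inner_sub_left, inner_sub_right, sum_inner, inner_sum, inner_smul_left,
    inner_smul_right, inner_conj_symm]
  congr 1
  exact sum_congr rfl fun i _ => mul_comm _ _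

variable (φ g : ℕ → E) (hg0 : g 0 = φ 0)
  (hg : ∀ n, g (n + 1) = φ (n + 1) - ∑ i ∈ range (n + 1), (inner 𝕜 (φ i) (φ (n + 1)) : 𝕜) • g i)
  (x : E) (X : ℕ → E) (hX0 : X 0 = (inner 𝕜 (φ 0) x : 𝕜) • φ 0)
  (hX : ∀ n, X (n + 1) = X n + (inner 𝕜 (φ (n + 1)) (x - X n) : 𝕜) • φ (n + 1))
include hg0 hg hX0 hX

theorem kaczmarz_iterate_eq_sum (n : ℕ) :
    X n = ∑ i ∈ range (n + 1), (inner 𝕜 (g i) x : 𝕜) • φ i := by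
  induction n with
  | zero => simp [hX0, hg0]
  | succ n ih =>
    rw [hX n, ih, sum_range_succ _ (n + 1), inner_kaczmarz_aux_succ φ g n (hg n)]

theorem norm_sub_kaczmarz_iterate_sq (hφ : ∀ n, ‖φ n‖ = 1) (n : ℕ) :
    ‖x - X n‖ ^ 2 = ‖x‖ ^ 2 - ∑ i ∈ range (n + 1), ‖(inner 𝕜 (g i) x : 𝕜)‖ ^ 2 := by
  induction n with
  | zero => simp [hX0, hg0, norm_sub_inner_smul_sq_of_norm_eq_one x (hφ 0)]
  | succ n ih =>
    have hcoef : (inner 𝕜 (g (n + 1)) x : 𝕜) = inner 𝕜 (φ (n + 1)) (x - X n) := by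
      rw [kaczmarz_iterate_eq_sum φ g hg0 hg x X hX0 hX n, inner_kaczmarz_aux_succ φ g n (hg n)]
    have hres : x - X (n + 1) = (x - X n) - (inner 𝕜 (φ (n + 1)) (x - X n) : 𝕜) • φ (n + 1) := by
      rw [hX n]; abel
    rw [hres, norm_sub_inner_smul_sq_of_norm_eq_one _ (hφ (n + 1)), ih, ← hcoef,
      sum_range_succ _ (n + 1)]
    ring

end

theorem exists_tendsto_and_hasSum_of_add_sum_range_eq {f a : ℕ → ℝ} {c : ℝ}
    (hf : ∀ n, 0 ≤ f n) (ha : ∀ n, 0 ≤ a n) (h : ∀ n, a n + ∑ i ∈ range (n + 1), f i = c) :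
    ∃ L, Tendsto a atTop (nhds L) ∧ HasSum f (c - L) := by
  have hsum : Summable f := by
    refine summable_of_sum_range_le (c := c) hf fun n => ?_
    calc ∑ i ∈ range n, f i ≤ ∑ i ∈ range (n + 1), f i :=
          sum_le_sum_of_subset_of_nonneg (range_subset_range.2 n.le_succ) fun i _ _ => hf i
      _ ≤ c := by linarith [h n, ha n]
  refine ⟨c - ∑' n, f n, ?_, by simpa using hsum.hasSum⟩
  have hpartial := hsum.hasSum.tendsto_sum_nat.comp (tendsto_add_atTop_nat 1)
  exact (tendsto_const_nhds.sub hpartial).congr fun n => by simp [← h n]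

theorem kaczmarz_energy_identity_general
    {H : Type*} [NormedAddCommGroup H] [InnerProductSpace ℂ H]
    (φ : ℕ → H) (hφ : ∀ n, ‖φ n‖ = 1)
    (g : ℕ → H)
    (hg0 : g 0 = φ 0)
    (hg : ∀ n : ℕ, g (n + 1) =
      φ (n + 1) - ∑ i ∈ Finset.range (n + 1), (inner ℂ (φ i) (φ (n + 1)) : ℂ) • g i)
    (x : H) (X : ℕ → H)
    (hX0 : X 0 = (inner ℂ (φ 0) x : ℂ) • φ 0)
    (hX : ∀ n : ℕ, X (n + 1) = X n + (inner ℂ (φ (n + 1)) (x - X n) : ℂ) • φ (n + 1)) :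
    ∃ L : ℝ, Tendsto (fun n => ‖x - X n‖ ^ 2) atTop (nhds L) ∧
      HasSum (fun n => ‖(inner ℂ (g n) x : ℂ)‖ ^ 2) (‖x‖ ^ 2 - L) :=
  exists_tendsto_and_hasSum_of_add_sum_range_eq (fun _ => sq_nonneg _) (fun _ => sq_nonneg _)
    fun n => by rw [norm_sub_kaczmarz_iterate_sq φ g hg0 hg x X hX0 hX hφ n]; ring

/-- In a complex Hilbert space `H`, for a sequence of unit vectors `{φ_n}` with
Kaczmarz auxiliary sequence `{g_n}` and Kaczmarz iterates `{x_n}` of a vector `x`, the limit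
`lim_n ‖x - x_n‖²` exists and `‖x‖² - lim_n ‖x - x_n‖² = Σ_{n=0}^∞ |⟨x, g_n⟩|²`.
(Here `⟨u, v⟩` denotes the inner product linear in the first slot, i.e. `inner v u` in Mathlib.) -/
theorem kaczmarz_energy_identity
    {H : Type*} [NormedAddCommGroup H] [InnerProductSpace ℂ H] [CompleteSpace H]
    (φ : ℕ → H) (hφ : ∀ n, ‖φ n‖ = 1)
    (g : ℕ → H)
    (hg0 : g 0 = φ 0)
    (hg : ∀ n : ℕ, g (n + 1) =
      φ (n + 1) - ∑ i ∈ Finset.range (n + 1), (inner ℂ (φ i) (φ (n + 1)) : ℂ) • g i)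
    (x : H) (X : ℕ → H)
    (hX0 : X 0 = (inner ℂ (φ 0) x : ℂ) • φ 0)
    (hX : ∀ n : ℕ, X (n + 1) = X n + (inner ℂ (φ (n + 1)) (x - X n) : ℂ) • φ (n + 1)) :
    ∃ L : ℝ, Tendsto (fun n => ‖x - X n‖ ^ 2) atTop (nhds L) ∧
      HasSum (fun n => ‖(inner ℂ (g n) x : ℂ)‖ ^ 2) (‖x‖ ^ 2 - L) :=
  kaczmarz_energy_identity_general φ hφ g hg0 hg x X hX0 hX
end

section
/- Let μ be a Borel probability measure on [0,1) with Fourier–Stieltjes transform μ̂, and define α_0 = 1 and, for n ≥ 1, α_n = Σ_{p ∈ P_n} (−1)^{l(p)} Π_{j=1}^{l(p)} μ̂(p_j), where P_n is the set of compositions of n and l(p) is the length of the composition p. Let {g_n}_{n≥0} be the Kaczmarz auxiliary sequence associated to the exponentials {e_n}_{n≥0} in L²(μ). Then for all n ∈ ℕ, g_n = Σ_{j=0}^{n} conj(α_{n−j}) e_j. -/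
/-
The Kaczmarz recursion for `gₙ` involves the Gram coefficients `⟨eᵢ, eₙ⟩ = conj μ̂(n - i)`, which
depend only on `n - i`. For such a Toeplitz recursion, `gₙ = ∑ⱼ βₙ₋ⱼ eⱼ` where `β` is the
convolution inverse of `1 + ∑ₖ₌₁ conj μ̂(k) Xᵏ`, i.e. `β₀ = 1` and `βₘ₊₁ = -∑ₖ conj μ̂(k+1) βₘ₋ₖ`.
Splitting off the first block of a composition shows that `αₙ` satisfies exactly the conjugate
recursion, so `β = conj α`.
-/

open MeasureTheory Filter Finset ComplexConjugate

namespace Composition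

variable {R : Type*} [Semiring R] (w : ℕ → R)

theorem sum_prod_map_blocks_zero : ∑ c : Composition 0, (c.blocks.map w).prod = 1 := by
  rw [Fintype.sum_eq_single (ones 0) fun c hc => (hc (Composition.ext ?_)).elim] <;> simp

theorem blocks_ne_nil {n : ℕ} (c : Composition (n + 1)) : c.blocks ≠ [] := fun h => by
  simpa [h] using c.blocks_sum

theorem head!_pos {n : ℕ} (c : Composition (n + 1)) : 0 < c.blocks.head! :=
  c.blocks_pos (List.head!_mem_self c.blocks_ne_nil)

theorem head!_add_sum_tail {n : ℕ} (c : Composition (n + 1)) :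
    c.blocks.head! + c.blocks.tail.sum = n + 1 := by
  rw [← List.sum_cons, List.cons_head!_tail c.blocks_ne_nil, c.blocks_sum]

theorem sum_prod_map_blocks_succ (m : ℕ) :
    ∑ c : Composition (m + 1), (c.blocks.map w).prod =
      ∑ k ∈ range (m + 1), w (k + 1) * ∑ c : Composition (m - k), (c.blocks.map w).prod := by
  simp_rw [mul_sum]
  rw [sum_sigma']
  symm
  refine sum_bij' (fun x hx => ⟨(x.1 + 1) :: x.2.blocks, ?_, ?_⟩)
    (fun c _ => ⟨c.blocks.head! - 1, c.blocks.tail, ?_, ?_⟩) ?_ ?_ ?_ ?_ ?_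
  · intro i hi
    rcases List.mem_cons.mp hi with rfl | hi
    exacts [x.1.succ_pos, x.2.blocks_pos hi]
  · simp only [mem_sigma, mem_range] at hx
    simp only [List.sum_cons, x.2.blocks_sum]
    omega
  · exact fun hi => c.blocks_pos (List.mem_of_mem_tail hi)
  · have := c.head!_add_sum_tail
    have := c.head!_pos
    omega
  · simp
  · intro c _
    have := c.head!_add_sum_tail
    have := c.head!_pos
    simp only [mem_sigma, mem_range, mem_univ, and_true]
    omega
  · intro x _
    rfl
  · intro c _
    ext1
    simp [Nat.sub_add_cancel c.head!_pos, List.cons_head!_tail c.blocks_ne_nil]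
  · intro x _
    simp

end Composition

section ToeplitzRecursion

variable {R M : Type*} [Ring R] [AddCommGroup M] [Module R M] {c β : ℕ → R}

theorem sum_range_mul_eq_neg_of_recursion
    (hβ : ∀ m, β (m + 1) = -∑ k ∈ range (m + 1), c (k + 1) * β (m - k)) (d : ℕ) :
    ∑ k ∈ range (d + 1), c (d + 1 - k) * β k = -β (d + 1) := by
  rw [hβ, neg_neg, ← sum_range_reflect]
  refine sum_congr rfl fun k hk => ?_
  rw [mem_range] at hk
  congr 2; omega

theorem sum_Ico_mul_eq_neg_of_recursion
    (hβ : ∀ m, β (m + 1) = -∑ k ∈ range (m + 1), c (k + 1) * β (m - k)) {j n : ℕ} (hj : j ≤ n) :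
    ∑ i ∈ Ico j (n + 1), c (n + 1 - i) * β (i - j) = -β (n + 1 - j) := by
  rw [sum_Ico_eq_sum_range, show n + 1 - j = n - j + 1 by omega,
    ← sum_range_mul_eq_neg_of_recursion hβ]
  refine sum_congr rfl fun k _ => ?_
  rw [Nat.add_sub_cancel_left, show n + 1 - (j + k) = n - j + 1 - k by omega]

theorem eq_sum_smul_of_toeplitz_recursion {e g : ℕ → M} (hg0 : g 0 = e 0)
    (hg : ∀ n, g (n + 1) = e (n + 1) - ∑ i ∈ range (n + 1), c (n + 1 - i) • g i)
    (hβ0 : β 0 = 1) (hβ : ∀ m, β (m + 1) = -∑ k ∈ range (m + 1), c (k + 1) * β (m - k))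
    (n : ℕ) : g n = ∑ j ∈ range (n + 1), β (n - j) • e j := by
  induction n using Nat.strong_induction_on with
  | _ n ih =>
  cases n with
  | zero => simp [hg0, hβ0]
  | succ n =>
    have hswap : ∑ i ∈ range (n + 1), c (n + 1 - i) • g i =
        ∑ j ∈ range (n + 1), (∑ i ∈ Ico j (n + 1), c (n + 1 - i) * β (i - j)) • e j := by
      calc ∑ i ∈ range (n + 1), c (n + 1 - i) • g i
          = ∑ i ∈ range (n + 1), ∑ j ∈ range (i + 1), (c (n + 1 - i) * β (i - j)) • e j :=
            sum_congr rfl fun i hi => by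
              rw [ih i (mem_range.mp hi), smul_sum]
              simp only [smul_smul]
        _ = _ := by
            rw [sum_comm' (t' := range (n + 1)) (s' := fun j => Ico j (n + 1)) fun i j => by
              simp only [mem_range, mem_Ico]; omega]
            simp only [sum_smul]
    rw [hg, hswap, sum_range_succ _ (n + 1), Nat.sub_self, hβ0, one_smul, sub_eq_add_neg,
      ← sum_neg_distrib, add_comm (e (n + 1))]
    congr 1
    refine sum_congr rfl fun j hj => ?_
    rw [sum_Ico_mul_eq_neg_of_recursion hβ (Nat.lt_succ_iff.mp (mem_range.mp hj)), neg_smul,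
      neg_neg]

end ToeplitzRecursion

theorem inner_eq_conj_integral_of_ae_eq_exp {μ : Measure ℝ} {f₁ f₂ : Lp ℂ 2 μ} {a b : ℝ}
    (h₁ : f₁ =ᵐ[μ] fun x => Complex.exp (2 * Real.pi * Complex.I * a * x))
    (h₂ : f₂ =ᵐ[μ] fun x => Complex.exp (2 * Real.pi * Complex.I * b * x)) :
    inner ℂ f₁ f₂ = conj (∫ y, Complex.exp (-(2 * Real.pi * Complex.I * (b - a : ℝ) * y)) ∂μ) := by
  rw [L2.inner_def, ← integral_conj]
  refine integral_congr_ae ?_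
  filter_upwards [h₁, h₂] with x hx₁ hx₂
  simp only [RCLike.inner_apply, hx₁, hx₂, ← Complex.exp_conj, ← Complex.exp_add, map_neg, map_mul,
    Complex.conj_I, Complex.conj_ofReal, map_ofNat]
  push_cast
  ring_nf

theorem gn_composition_formula_general
    (μ : Measure ℝ)
    (μhat : ℝ → ℂ)
    (hμhat : ∀ x : ℝ, μhat x = ∫ y, Complex.exp (-(2 * Real.pi * Complex.I * x * y)) ∂μ)
    (α : ℕ → ℂ)
    (hα0 : α 0 = 1)
    (hα : ∀ n : ℕ, 0 < n → α n = ∑ p : Composition n,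
      (-1 : ℂ) ^ p.length * (p.blocks.map fun q => μhat (q : ℝ)).prod)
    (e : ℕ → Lp ℂ 2 μ)
    (he : ∀ n : ℕ, (e n : ℝ → ℂ) =ᵐ[μ]
      fun x => Complex.exp (2 * Real.pi * Complex.I * n * x))
    (g : ℕ → Lp ℂ 2 μ)
    (hg0 : g 0 = e 0)
    (hg : ∀ n : ℕ, g (n + 1) =
      e (n + 1) - ∑ i ∈ Finset.range (n + 1), (inner ℂ (e i) (e (n + 1)) : ℂ) • g i) :
    ∀ n : ℕ, g n = ∑ j ∈ Finset.range (n + 1), (starRingEnd ℂ) (α (n - j)) • e j := by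
  have hα_prod : ∀ n, α n = ∑ p : Composition n, (p.blocks.map fun q : ℕ => -μhat q).prod := by
    rintro (_ | n)
    · rw [hα0, Composition.sum_prod_map_blocks_zero]
    · rw [hα _ n.succ_pos]
      refine sum_congr rfl fun p _ => ?_
      -- `hα` elaborates `p.blocks.map fun q => μhat (q : ℝ)` by first coercing the list to `List ℝ`
      simp only [List.bind_eq_flatMap, List.pure_def, ← List.map_eq_flatMap, List.map_map,
        Function.comp_def]
      rw [← p.blocks_length, ← List.length_map (fun q : ℕ => μhat q), ← List.prod_map_neg,
        List.map_map]
      rfl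
  have hα_succ (m : ℕ) : α (m + 1) = -∑ k ∈ range (m + 1), μhat (k + 1 : ℕ) * α (m - k) := by
    simp only [hα_prod, Composition.sum_prod_map_blocks_succ, neg_mul, sum_neg_distrib]
  have hinner (i n : ℕ) (hin : i ≤ n) : inner ℂ (e i) (e n) = conj (μhat (n - i : ℕ)) := by
    rw [inner_eq_conj_integral_of_ae_eq_exp (by exact_mod_cast he i) (by exact_mod_cast he n),
      hμhat, Nat.cast_sub hin]
  refine eq_sum_smul_of_toeplitz_recursion (c := fun k => conj (μhat k))
    (β := fun k => conj (α k)) hg0 (fun n => ?_) (by simp [hα0]) (fun m => ?_)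
  · rw [hg n]
    congr 1
    exact sum_congr rfl fun i hi => by rw [hinner i (n + 1) (mem_range.mp hi).le]
  · simp only [hα_succ, map_neg, map_sum, map_mul]

/-- Let `μ` be a Borel probability measure on `[0,1)` with Fourier–Stieltjes
transform `μ̂(x) = ∫₀¹ exp(-2πixy) dμ(y)`.  With `α_0 = 1` and
`α_n = Σ_{p ∈ P_n} (-1)^{l(p)} Π_{j=1}^{l(p)} μ̂(p_j)` (sum over all compositions `p` of `n`,
`l(p)` the length of `p`), the Kaczmarz auxiliary sequence `{g_n}` of the exponentials
`e_n(x) = exp(2πinx)` in `L²(μ)` satisfies `g_n = Σ_{j=0}^n conj(α_{n-j}) e_j` for all `n`. -/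
theorem gn_composition_formula
    (μ : Measure ℝ) [IsProbabilityMeasure μ]
    (hsupp : μ (Set.Ico (0 : ℝ) 1)ᶜ = 0)
    (μhat : ℝ → ℂ)
    (hμhat : ∀ x : ℝ, μhat x = ∫ y, Complex.exp (-(2 * Real.pi * Complex.I * x * y)) ∂μ)
    (α : ℕ → ℂ)
    (hα0 : α 0 = 1)
    (hα : ∀ n : ℕ, 0 < n → α n = ∑ p : Composition n,
      (-1 : ℂ) ^ p.length * (p.blocks.map fun q => μhat (q : ℝ)).prod)
    (e : ℕ → Lp ℂ 2 μ)
    (he : ∀ n : ℕ, (e n : ℝ → ℂ) =ᵐ[μ]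
      fun x => Complex.exp (2 * Real.pi * Complex.I * n * x))
    (g : ℕ → Lp ℂ 2 μ)
    (hg0 : g 0 = e 0)
    (hg : ∀ n : ℕ, g (n + 1) =
      e (n + 1) - ∑ i ∈ Finset.range (n + 1), (inner ℂ (e i) (e (n + 1)) : ℂ) • g i) :
    ∀ n : ℕ, g n = ∑ j ∈ Finset.range (n + 1), (starRingEnd ℂ) (α (n - j)) • e j :=
  gn_composition_formula_general μ μhat hμhat α hα0 hα e he g hg0 hg
end

section
/- Let μ be a singular Borel probability measure on [0,1). Suppose ν and ν′ are Borel probability measures on [0,1), each singular with respect to Lebesgue measure and each mutually singular with μ; let 0 < η, η′ ≤ 1, λ = ημ + (1−η)ν, λ′ = η′μ + (1−η′)ν′, and let {h_n} and {h′_n} be the Kaczmarz auxiliary sequences of the exponentials in L²(λ) and L²(λ′) respectively. If λ ≠ λ′, then the sequences {η h_n} and {η′ h′_n} are distinct as sequences in L²(μ), i.e., there exists n with η h_n ≠ η′ h′_n in L²(μ). -/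
/-!
If `η hₙ = η′ h′ₙ` in `L²(μ)` for every `n`, then `n = 0` gives `η = η′`, so `hₙ = h′ₙ` `μ`-a.e.
Unwinding the Kaczmarz recursion, `hₙ` is `λ`-a.e. a fixed expression `Kₙ(λ̂)` in the
exponentials and the Fourier coefficients `λ̂(1), …, λ̂(n)`, because `⟨eᵢ, eⱼ⟩_λ = λ̂(j - i)`.
If `λ̂` and `λ̂′` agree up to `n`, then `Kₙ₊₁(λ̂) - Kₙ₊₁(λ̂′)` is the constant
`λ̂′(n + 1) - λ̂(n + 1)`, which vanishes `μ`-a.e. and hence identically. So all Fourier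
coefficients of `λ` and `λ′` agree, and measures on `[0,1)` are determined by them.
-/

open MeasureTheory Filter

noncomputable def natExp (n : ℕ) (x : ℝ) : ℂ := Complex.exp (2 * Real.pi * Complex.I * n * x)

noncomputable def expMoment (lam : Measure ℝ) (n : ℕ) : ℂ := ∫ x, natExp n x ∂lam

theorem natExp_zero : natExp 0 = fun _ => 1 := by
  ext x; simp [natExp]

theorem conj_natExp_mul_natExp {i j : ℕ} (hij : i ≤ j) (x : ℝ) :
    starRingEnd ℂ (natExp i x) * natExp j x = natExp (j - i) x := by
  simp only [natExp, ← Complex.exp_conj, map_mul, Complex.conj_I, Complex.conj_ofReal,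
    Complex.conj_natCast, map_ofNat, ← Complex.exp_add, Nat.cast_sub hij]
  ring_nf

theorem expMoment_zero (lam : Measure ℝ) [IsProbabilityMeasure lam] : expMoment lam 0 = 1 := by
  simp [expMoment, natExp_zero]

theorem inner_eq_expMoment {lam : Measure ℝ} {f g : Lp ℂ 2 lam} {i j : ℕ} (hij : i ≤ j)
    (hf : ⇑f =ᵐ[lam] natExp i) (hg : ⇑g =ᵐ[lam] natExp j) :
    inner ℂ f g = expMoment lam (j - i) := by
  rw [L2.inner_def, expMoment]
  refine integral_congr_ae ?_
  filter_upwards [hf, hg] with x hfx hgx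
  rw [RCLike.inner_apply, hfx, hgx, mul_comm, conj_natExp_mul_natExp hij]

namespace AddCircle

variable {T : ℝ}

open BoundedContinuousFunction in
theorem measure_ext_of_integral_fourier_eq [Fact (0 < T)]
    {m m' : Measure (AddCircle T)} [IsFiniteMeasure m] [IsFiniteMeasure m']
    (h : ∀ n : ℤ, ∫ x, fourier n x ∂m = ∫ x, fourier n x ∂m') : m = m' := by
  have hint : ∀ (κ : Measure (AddCircle T)) [IsFiniteMeasure κ] (f : C(AddCircle T, ℂ)),
      Integrable f κ := fun κ _ f => (mkOfCompact f).integrable κ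
  have hspan : ∀ f ∈ Submodule.span ℂ (Set.range (fourier (T := T))),
      ∫ x, f x ∂m = ∫ x, f x ∂m' := by
    intro f hf
    induction hf using Submodule.span_induction with
    | mem f hf => obtain ⟨n, rfl⟩ := hf; exact h n
    | zero => simp
    | add f g _ _ hf hg =>
      simp only [ContinuousMap.add_apply]
      rw [integral_add (hint m f) (hint m g), integral_add (hint m' f) (hint m' g), hf, hg]
    | smul a f _ hf => simp only [ContinuousMap.smul_apply, integral_smul, hf]
  refine ext_of_forall_mem_subalgebra_integral_eq_of_pseudoEMetric_complete_countable
    (A := fourierSubalgebra.comap (toContinuousMapStarₐ ℂ)) ?_ fun g hg => ?_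
  · rintro x y hxy
    obtain ⟨-, ⟨f, hf, rfl⟩, hfxy⟩ := fourierSubalgebra_separatesPoints hxy
    refine ⟨mkOfCompact f, ⟨_, ⟨mkOfCompact f, hf, rfl⟩, rfl⟩, hfxy⟩
  · apply hspan (g.toContinuousMap)
    rw [← fourierSubalgebra_coe]
    exact hg

theorem integral_fourier_neg (m : Measure (AddCircle T)) (n : ℤ) :
    ∫ x, fourier (-n) x ∂m = starRingEnd ℂ (∫ x, fourier n x ∂m) := by
  simp only [fourier_neg, integral_conj]

theorem measure_ext_of_integral_fourier_natCast_eq [Fact (0 < T)]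
    {m m' : Measure (AddCircle T)} [IsFiniteMeasure m] [IsFiniteMeasure m']
    (h : ∀ n : ℕ, ∫ x, fourier n x ∂m = ∫ x, fourier n x ∂m') : m = m' := by
  refine measure_ext_of_integral_fourier_eq fun n => ?_
  obtain ⟨n, rfl | rfl⟩ := Int.eq_nat_or_neg n
  · exact h n
  · rw [integral_fourier_neg, integral_fourier_neg, h n]

theorem map_equivIco_map_coe {a : ℝ} [Fact (0 < T)] {κ : Measure ℝ}
    (hκ : κ (Set.Ico a (a + T))ᶜ = 0) :
    (κ.map ((↑) : ℝ → AddCircle T)).map (Subtype.val ∘ measurableEquivIco T a) = κ := by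
  rw [Measure.map_map (measurable_subtype_coe.comp (measurableEquivIco T a).measurable)
    AddCircle.measurable_mk']
  have hid : (Subtype.val ∘ measurableEquivIco T a) ∘ ((↑) : ℝ → AddCircle T) =ᵐ[κ] id := by
    filter_upwards [measure_eq_zero_iff_ae_notMem.mp hκ] with x hx
    exact congrArg Subtype.val (equivIco_coe_eq (not_not.mp hx))
  rw [Measure.map_congr hid, Measure.map_id]

theorem measure_eq_of_map_coe_eq {a : ℝ} [Fact (0 < T)] {κ κ' : Measure ℝ}
    (hκ : κ (Set.Ico a (a + T))ᶜ = 0) (hκ' : κ' (Set.Ico a (a + T))ᶜ = 0)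
    (h : κ.map ((↑) : ℝ → AddCircle T) = κ'.map (↑)) : κ = κ' := by
  rw [← map_equivIco_map_coe hκ, h, map_equivIco_map_coe hκ']

end AddCircle

theorem expMoment_eq_integral_fourier (lam : Measure ℝ) (n : ℕ) :
    expMoment lam n = ∫ x, fourier n x ∂(lam.map ((↑) : ℝ → AddCircle (1 : ℝ))) := by
  rw [integral_map AddCircle.measurable_mk'.aemeasurable (map_continuous _).aestronglyMeasurable,
    expMoment]
  simp only [natExp, fourier_coe_apply, Int.cast_natCast, Complex.ofReal_one, div_one]

theorem measure_eq_of_expMoment_eq {lam lam' : Measure ℝ} [IsFiniteMeasure lam]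
    [IsFiniteMeasure lam'] (hlam : lam (Set.Ico 0 1)ᶜ = 0) (hlam' : lam' (Set.Ico 0 1)ᶜ = 0)
    (h : expMoment lam = expMoment lam') : lam = lam' := by
  have : Fact ((0 : ℝ) < 1) := ⟨one_pos⟩
  refine AddCircle.measure_eq_of_map_coe_eq (T := 1) (a := 0) (by simpa using hlam)
    (by simpa using hlam') (AddCircle.measure_ext_of_integral_fourier_natCast_eq fun n => ?_)
  rw [← expMoment_eq_integral_fourier, ← expMoment_eq_integral_fourier, h]

/-- The function representing the `n`-th Kaczmarz auxiliary vector of the exponentials in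
`L²(λ)` when `⟨eᵢ, eⱼ⟩_λ = c (j - i)`. -/
noncomputable def kaczmarzFun (c : ℕ → ℂ) : ℕ → ℝ → ℂ
  | 0 => fun _ => 1
  | n + 1 => fun x => natExp (n + 1) x - ∑ i : Fin (n + 1), c (n + 1 - i) * kaczmarzFun c i x

theorem kaczmarzFun_zero (c : ℕ → ℂ) : kaczmarzFun c 0 = fun _ => 1 := by
  rw [kaczmarzFun]

theorem kaczmarzFun_succ (c : ℕ → ℂ) (n : ℕ) (x : ℝ) :
    kaczmarzFun c (n + 1) x =
      natExp (n + 1) x - ∑ i ∈ Finset.range (n + 1), c (n + 1 - i) * kaczmarzFun c i x := by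
  rw [kaczmarzFun, ← Fin.sum_univ_eq_sum_range (fun i => c (n + 1 - i) * kaczmarzFun c i x)]

theorem kaczmarzFun_congr {c c' : ℕ → ℂ} {n : ℕ} (h : ∀ j ≤ n, c j = c' j) :
    kaczmarzFun c n = kaczmarzFun c' n := by
  induction n using Nat.strong_induction_on with
  | _ n ih =>
    cases n with
    | zero => rw [kaczmarzFun_zero, kaczmarzFun_zero]
    | succ n =>
      ext x
      rw [kaczmarzFun_succ, kaczmarzFun_succ]
      refine congrArg _ (Finset.sum_congr rfl fun i hi => ?_)
      have hi := Finset.mem_range.mp hi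
      rw [h _ (by omega), ih i hi fun j hj => h j (by omega)]

theorem kaczmarzFun_succ_sub {c c' : ℕ → ℂ} {n : ℕ} (h : ∀ j ≤ n, c j = c' j) (x : ℝ) :
    kaczmarzFun c (n + 1) x - kaczmarzFun c' (n + 1) x = c' (n + 1) - c (n + 1) := by
  have hlow : ∀ i ∈ Finset.range n, c (n + 1 - (i + 1)) * kaczmarzFun c (i + 1) x =
      c' (n + 1 - (i + 1)) * kaczmarzFun c' (i + 1) x := fun i hi => by
    have hi := Finset.mem_range.mp hi
    rw [h _ (by omega), kaczmarzFun_congr fun j hj => h j (by omega)]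
  rw [kaczmarzFun_succ, kaczmarzFun_succ, Finset.sum_range_succ', Finset.sum_range_succ',
    Finset.sum_congr rfl hlow, kaczmarzFun_zero, kaczmarzFun_zero, Nat.sub_zero]
  ring

theorem eq_of_kaczmarzFun_ae_eq {μ : Measure ℝ} [NeZero μ] {c c' : ℕ → ℂ} (h0 : c 0 = c' 0)
    (h : ∀ n, kaczmarzFun c n =ᵐ[μ] kaczmarzFun c' n) : c = c' := by
  suffices ∀ n, ∀ j ≤ n, c j = c' j from funext fun n => this n n le_rfl
  intro n
  induction n with
  | zero => intro j hj; rwa [Nat.le_zero.mp hj]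
  | succ n ih =>
    intro j hj
    rcases Nat.of_le_succ hj with hj | rfl
    · exact ih j hj
    obtain ⟨x, hx⟩ := (h (n + 1)).exists
    have := kaczmarzFun_succ_sub ih x
    rw [hx, sub_self] at this
    exact (sub_eq_zero.mp this.symm).symm

theorem coeFn_ae_eq_kaczmarzFun {lam : Measure ℝ} (e : ℕ → Lp ℂ 2 lam)
    (he : ∀ n, ⇑(e n) =ᵐ[lam] natExp n) (h : ℕ → Lp ℂ 2 lam) (h0 : h 0 = e 0)
    (hsucc : ∀ n, h (n + 1) =
      e (n + 1) - ∑ i ∈ Finset.range (n + 1), (inner ℂ (e i) (e (n + 1)) : ℂ) • h i)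
    (n : ℕ) : ⇑(h n) =ᵐ[lam] kaczmarzFun (expMoment lam) n := by
  induction n using Nat.strong_induction_on with
  | _ n ih =>
    cases n with
    | zero => rw [h0, kaczmarzFun_zero, ← natExp_zero]; exact he 0
    | succ n =>
      have hterms : ∀ᵐ x ∂lam, ∀ i ∈ Finset.range (n + 1),
          ((inner ℂ (e i) (e (n + 1)) : ℂ) • h i) x =
            expMoment lam (n + 1 - i) * kaczmarzFun (expMoment lam) i x := by
        refine (eventually_all_finset _).mpr fun i hi => ?_
        have hi := Finset.mem_range.mp hi
        filter_upwards [Lp.coeFn_smul (inner ℂ (e i) (e (n + 1)) : ℂ) (h i), ih i hi]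
          with x hsmul hhi
        rw [hsmul, Pi.smul_apply, hhi, smul_eq_mul,
          inner_eq_expMoment (by omega) (he i) (he (n + 1))]
      rw [hsucc n]
      filter_upwards [Lp.coeFn_sub (e (n + 1)) (∑ i ∈ Finset.range (n + 1),
          (inner ℂ (e i) (e (n + 1)) : ℂ) • h i), Lp.coeFn_fun_finsetSum (Finset.range (n + 1))
        fun i => (inner ℂ (e i) (e (n + 1)) : ℂ) • h i, he (n + 1), hterms]
        with x hsub hsum hen hterm
      rw [hsub, Pi.sub_apply, hsum, hen, kaczmarzFun_succ, Finset.sum_congr rfl hterm]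

theorem isProbabilityMeasure_smul_add_smul {α : Type*} [MeasurableSpace α] {μ ν : Measure α}
    [IsProbabilityMeasure μ] [IsProbabilityMeasure ν] {η : ℝ} (h0 : 0 ≤ η) (h1 : η ≤ 1) :
    IsProbabilityMeasure (ENNReal.ofReal η • μ + ENNReal.ofReal (1 - η) • ν) := by
  constructor
  simp only [Measure.coe_add, Pi.add_apply, Measure.smul_apply, measure_univ, smul_eq_mul,
    mul_one, ← ENNReal.ofReal_add h0 (sub_nonneg.mpr h1), add_sub_cancel, ENNReal.ofReal_one]

theorem absolutelyContinuous_ofReal_smul_add {α : Type*} [MeasurableSpace α] (μ ν : Measure α)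
    {η : ℝ} (hη : 0 < η) (c : ENNReal) : μ ≪ ENNReal.ofReal η • μ + c • ν :=
  (Measure.absolutelyContinuous_smul (ENNReal.ofReal_pos.mpr hη).ne').add_right _

theorem perturbed_sequences_distinct_general
    (μ ν ν' : Measure ℝ)
    [IsProbabilityMeasure μ] [IsProbabilityMeasure ν] [IsProbabilityMeasure ν']
    (hμsupp : μ (Set.Ico (0 : ℝ) 1)ᶜ = 0)
    (hνsupp : ν (Set.Ico (0 : ℝ) 1)ᶜ = 0)
    (hν'supp : ν' (Set.Ico (0 : ℝ) 1)ᶜ = 0)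
    (η η' : ℝ) (hη0 : 0 < η) (hη1 : η ≤ 1) (hη'0 : 0 < η') (hη'1 : η' ≤ 1)
    (lam lam' : Measure ℝ)
    (hlam : lam = ENNReal.ofReal η • μ + ENNReal.ofReal (1 - η) • ν)
    (hlam' : lam' = ENNReal.ofReal η' • μ + ENNReal.ofReal (1 - η') • ν')
    (elam : ℕ → Lp ℂ 2 lam)
    (helam : ∀ n : ℕ, (elam n : ℝ → ℂ) =ᵐ[lam]
      fun x => Complex.exp (2 * Real.pi * Complex.I * n * x))
    (elam' : ℕ → Lp ℂ 2 lam')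
    (helam' : ∀ n : ℕ, (elam' n : ℝ → ℂ) =ᵐ[lam']
      fun x => Complex.exp (2 * Real.pi * Complex.I * n * x))
    (h : ℕ → Lp ℂ 2 lam)
    (hh0 : h 0 = elam 0)
    (hh : ∀ n : ℕ, h (n + 1) =
      elam (n + 1) - ∑ i ∈ Finset.range (n + 1), (inner ℂ (elam i) (elam (n + 1)) : ℂ) • h i)
    (h' : ℕ → Lp ℂ 2 lam')
    (hh'0 : h' 0 = elam' 0)
    (hh' : ∀ n : ℕ, h' (n + 1) =
      elam' (n + 1) - ∑ i ∈ Finset.range (n + 1), (inner ℂ (elam' i) (elam' (n + 1)) : ℂ) • h' i)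
    (hne : lam ≠ lam') :
    ∃ n : ℕ, ¬ ((fun x => (η : ℂ) * (h n : ℝ → ℂ) x) =ᵐ[μ]
      fun x => (η' : ℂ) * (h' n : ℝ → ℂ) x) := by
  have : IsProbabilityMeasure lam := hlam ▸ isProbabilityMeasure_smul_add_smul hη0.le hη1
  have : IsProbabilityMeasure lam' := hlam' ▸ isProbabilityMeasure_smul_add_smul hη'0.le hη'1
  have hμlam : μ ≪ lam := hlam ▸ absolutelyContinuous_ofReal_smul_add μ ν hη0 _
  have hμlam' : μ ≪ lam' := hlam' ▸ absolutelyContinuous_ofReal_smul_add μ ν' hη'0 _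
  by_contra! hcon
  have hK : ∀ n, (fun x => (η : ℂ) * kaczmarzFun (expMoment lam) n x) =ᵐ[μ]
      fun x => (η' : ℂ) * kaczmarzFun (expMoment lam') n x := fun n => by
    filter_upwards [hcon n, hμlam.ae_le (coeFn_ae_eq_kaczmarzFun elam helam h hh0 hh n),
      hμlam'.ae_le (coeFn_ae_eq_kaczmarzFun elam' helam' h' hh'0 hh' n)] with x hx hK hK'
    rwa [← hK, ← hK']
  have hηη' : (η : ℂ) = η' := by
    obtain ⟨x, hx⟩ := (hK 0).exists
    simpa [kaczmarzFun_zero] using hx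
  have hmoment : expMoment lam = expMoment lam' := by
    refine eq_of_kaczmarzFun_ae_eq (μ := μ) (by rw [expMoment_zero, expMoment_zero]) fun n => ?_
    filter_upwards [hK n] with x hx
    exact mul_left_cancel₀ (by exact_mod_cast hη'0.ne') (hηη' ▸ hx)
  exact hne (measure_eq_of_expMoment_eq (by simp [hlam, hμsupp, hνsupp])
    (by simp [hlam', hμsupp, hν'supp]) hmoment)

/-- Let `μ` be a singular Borel probability measure on `[0,1)`, and let
`ν, ν′` be Borel probability measures on `[0,1)`, each singular with respect to Lebesgue
measure and mutually singular with `μ`.  For `0 < η, η′ ≤ 1` set `λ = ημ + (1-η)ν` and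
`λ′ = η′μ + (1-η′)ν′`, and let `{h_n}`, `{h′_n}` be the Kaczmarz auxiliary sequences of the
exponentials in `L²(λ)` and `L²(λ′)`.  If `λ ≠ λ′`, then the sequences `{η h_n}` and
`{η′ h′_n}` are distinct as sequences in `L²(μ)`: there is an `n` with `η h_n ≠ η′ h′_n`
`μ`-a.e. -/
theorem perturbed_sequences_distinct
    (μ ν ν' : Measure ℝ)
    [IsProbabilityMeasure μ] [IsProbabilityMeasure ν] [IsProbabilityMeasure ν']
    (hμsupp : μ (Set.Ico (0 : ℝ) 1)ᶜ = 0)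
    (hνsupp : ν (Set.Ico (0 : ℝ) 1)ᶜ = 0)
    (hν'supp : ν' (Set.Ico (0 : ℝ) 1)ᶜ = 0)
    (hμsing : μ.MutuallySingular MeasureTheory.volume)
    (hνsing : ν.MutuallySingular MeasureTheory.volume)
    (hν'sing : ν'.MutuallySingular MeasureTheory.volume)
    (hμν : ν.MutuallySingular μ) (hμν' : ν'.MutuallySingular μ)
    (η η' : ℝ) (hη0 : 0 < η) (hη1 : η ≤ 1) (hη'0 : 0 < η') (hη'1 : η' ≤ 1)
    (lam lam' : Measure ℝ)
    (hlam : lam = ENNReal.ofReal η • μ + ENNReal.ofReal (1 - η) • ν)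
    (hlam' : lam' = ENNReal.ofReal η' • μ + ENNReal.ofReal (1 - η') • ν')
    (elam : ℕ → Lp ℂ 2 lam)
    (helam : ∀ n : ℕ, (elam n : ℝ → ℂ) =ᵐ[lam]
      fun x => Complex.exp (2 * Real.pi * Complex.I * n * x))
    (elam' : ℕ → Lp ℂ 2 lam')
    (helam' : ∀ n : ℕ, (elam' n : ℝ → ℂ) =ᵐ[lam']
      fun x => Complex.exp (2 * Real.pi * Complex.I * n * x))
    (h : ℕ → Lp ℂ 2 lam)
    (hh0 : h 0 = elam 0)
    (hh : ∀ n : ℕ, h (n + 1) =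
      elam (n + 1) - ∑ i ∈ Finset.range (n + 1), (inner ℂ (elam i) (elam (n + 1)) : ℂ) • h i)
    (h' : ℕ → Lp ℂ 2 lam')
    (hh'0 : h' 0 = elam' 0)
    (hh' : ∀ n : ℕ, h' (n + 1) =
      elam' (n + 1) - ∑ i ∈ Finset.range (n + 1), (inner ℂ (elam' i) (elam' (n + 1)) : ℂ) • h' i)
    (hne : lam ≠ lam') :
    ∃ n : ℕ, ¬ ((fun x => (η : ℂ) * (h n : ℝ → ℂ) x) =ᵐ[μ]
      fun x => (η' : ℂ) * (h' n : ℝ → ℂ) x) :=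
  perturbed_sequences_distinct_general μ ν ν' hμsupp hνsupp hν'supp η η' hη0 hη1 hη'0 hη'1 lam lam'
    hlam hlam' elam helam elam' helam' h hh0 hh h' hh'0 hh' hne
end

section
/- Let μ be a Borel probability measure on [0,1) with Cauchy integral F(z) = ∫₀¹ 1/(1 − z e^{−2πix}) dμ(x), and let α_n be the composition-sum coefficients determined by μ̂ (α_0 = 1 and α_n = Σ_{p ∈ P_n} (−1)^{l(p)} Π_{j=1}^{l(p)} μ̂(p_j) for n ≥ 1). Then for every z in the open unit disk, F(z) ≠ 0 and 1/F(z) = Σ_{n=0}^∞ α_n z^n. -/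
/-!
For `‖z‖ < 1`, expanding `(1 - z e^{-2πix})⁻¹` as a geometric series under the integral gives
`F(z) = ∑ μ̂(n) zⁿ`, and `Re F(z) ≥ 1/2` because `Re (1 - w)⁻¹ ≥ 1/2` on the unit disk. So `1/F` is
holomorphic on the disk. Near `0` it is the composite of `F` (with `F(0) = 1`) and of
`w ↦ w⁻¹ = ∑ (-1)ᵏ (w - 1)ᵏ`; the composition of these two power series has exactly the
coefficients `α_n`. The Taylor series of a holomorphic function converges on every disk of
holomorphy, hence on the whole unit disk.
-/

open MeasureTheory Complex FormalMultilinearSeries Metric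
open scoped NNReal ENNReal

noncomputable def fourierStieltjes (μ : Measure ℝ) (x : ℝ) : ℂ :=
  ∫ y, cexp (-(2 * Real.pi * I * x * y)) ∂μ

noncomputable def cauchyIntegral (μ : Measure ℝ) (z : ℂ) : ℂ :=
  ∫ x, (1 - z * cexp (-(2 * Real.pi * I * x)))⁻¹ ∂μ

theorem FormalMultilinearSeries.ofScalars_comp_ofScalars {𝕜 : Type*} [NontriviallyNormedField 𝕜]
    (b a : ℕ → 𝕜) :
    (ofScalars 𝕜 b).comp (ofScalars 𝕜 a) =
      ofScalars 𝕜 fun n => ∑ c : Composition n, b c.length * ∏ i, a (c.blocksFun i) := by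
  ext n : 1
  rw [← mkPiRing_coeff_eq ((ofScalars 𝕜 b).comp _), ← mkPiRing_coeff_eq (ofScalars 𝕜 _),
    coeff_ofScalars]
  congr 1
  simp only [coeff, FormalMultilinearSeries.comp, sum_apply, compAlongComposition_apply, ofScalars,
    _root_.smul_apply, ContinuousMultilinearMap.mkPiAlgebraFin_apply, smul_eq_mul, List.prod_ofFn]
  congr! with c - i
  simp [applyComposition]

instance : Subsingleton (Composition 0) :=
  ⟨fun c d => Composition.ext <| by rw [c.blocks_eq_nil.2 rfl, d.blocks_eq_nil.2 rfl]⟩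

theorem hasFPowerSeriesOnBall_ofScalars_of_hasSum {c : ℕ → ℂ} {f : ℂ → ℂ} {r : ℝ≥0}
    (hr : 0 < r) (h : ∀ z : ℂ, ‖z‖ < r → HasSum (fun n => c n * z ^ n) (f z)) :
    HasFPowerSeriesOnBall f (ofScalars ℂ c) 0 r where
  r_le := ENNReal.le_of_forall_pos_nnreal_lt fun ρ _ hρ => by
    refine le_radius_of_tendsto _ (l := 0) ?_
    have := (h ρ (by simpa using hρ)).summable.tendsto_atTop_zero.norm
    simpa [ofScalars_norm] using this
  r_pos := by simpa using hr
  hasSum {z} hz := by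
    rw [mem_eball_zero_iff, enorm_lt_coe, ← NNReal.coe_lt_coe, coe_nnnorm] at hz
    simpa [ofScalars_apply_eq, mul_comm] using h z hz

theorem HasFPowerSeriesAt.hasFPowerSeriesOnBall_of_differentiableOn {E : Type*}
    [NormedAddCommGroup E] [NormedSpace ℂ E] [CompleteSpace E] {f : ℂ → E}
    {p : FormalMultilinearSeries ℂ ℂ E} {c : ℂ} {r : ℝ≥0} (hf : HasFPowerSeriesAt f p c)
    (hr : 0 < r) (hd : DifferentiableOn ℂ f (ball c r)) : HasFPowerSeriesOnBall f p c r := by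
  have hsub : ∀ ρ : ℝ≥0, 0 < ρ → ρ < r → HasFPowerSeriesOnBall f p c ρ := fun ρ hρ hρr =>
    hf.choose_spec.exchange_radius <|
      (hd.mono (closedBall_subset_ball (by exact_mod_cast hρr))).hasFPowerSeriesOnBall hρ
  refine ⟨ENNReal.le_of_forall_pos_nnreal_lt fun ρ hρ hρr =>
    (hsub ρ hρ (by exact_mod_cast hρr)).r_le, by simpa using hr, fun {y} hy => ?_⟩
  rw [mem_eball_zero_iff, enorm_lt_coe] at hy
  obtain ⟨ρ, hyρ, hρr⟩ := exists_between hy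
  exact (hsub ρ (pos_of_gt hyρ) hρr).hasSum (by rwa [mem_eball_zero_iff, enorm_lt_coe])

theorem hasFPowerSeriesAt_inv_one :
    HasFPowerSeriesAt (fun w : ℂ => w⁻¹) (alternatingGeometricSeries ℂ ℂ) 1 := by
  simpa using (hasFPowerSeriesOnBall_inv_one_add ℂ ℂ).hasFPowerSeriesAt.comp_sub 1

lemma norm_cexp_neg_two_pi_I_mul (t : ℝ) : ‖cexp (-(2 * Real.pi * I * t))‖ = 1 := by
  rw [show -(2 * Real.pi * I * t) = ((-(2 * Real.pi * t) : ℝ) : ℂ) * I by push_cast; ring,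
    norm_exp_ofReal_mul_I]

lemma cexp_neg_two_pi_I_mul_pow (x : ℝ) (n : ℕ) :
    cexp (-(2 * Real.pi * I * x)) ^ n = cexp (-(2 * Real.pi * I * (n : ℝ) * x)) := by
  rw [← exp_nat_mul]
  congr 1
  push_cast
  ring

lemma one_half_le_re_inv_one_sub {w : ℂ} (hw : ‖w‖ < 1) : 1 / 2 ≤ ((1 - w)⁻¹).re := by
  have hne : 1 - w ≠ 0 := sub_ne_zero.2 fun h => by simp [← h] at hw
  have hnormSq : normSq w < 1 := by rw [normSq_eq_norm_sq]; nlinarith [norm_nonneg w]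
  rw [inv_re, le_div_iff₀ (normSq_pos.2 hne)]
  simp only [normSq_apply, sub_re, one_re, sub_im, one_im] at hnormSq ⊢
  nlinarith

section

variable (μ : Measure ℝ)

theorem hasSum_cauchyIntegral [IsFiniteMeasure μ] {z : ℂ} (hz : ‖z‖ < 1) :
    HasSum (fun n : ℕ => fourierStieltjes μ n * z ^ n) (cauchyIntegral μ z) := by
  set e : ℝ → ℂ := fun x => cexp (-(2 * Real.pi * I * x))
  have hnorm : ∀ n : ℕ, ∀ x, ‖(z * e x) ^ n‖ = ‖z‖ ^ n := fun n x => by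
    rw [norm_pow, norm_mul, norm_cexp_neg_two_pi_I_mul, mul_one]
  have hint : ∀ n : ℕ, Integrable (fun x => (z * e x) ^ n) μ := fun n =>
    .of_bound (by fun_prop) (‖z‖ ^ n) (.of_forall fun x => (hnorm n x).le)
  have H := hasSum_integral_of_summable_integral_norm hint <| by
    simpa [hnorm] using (summable_geometric_of_lt_one (norm_nonneg z) hz).mul_left (μ.real Set.univ)
  have hterm : ∀ n : ℕ, ∫ x, (z * e x) ^ n ∂μ = fourierStieltjes μ n * z ^ n := fun n => by
    simp_rw [mul_pow, integral_const_mul, e, cexp_neg_two_pi_I_mul_pow, fourierStieltjes, mul_comm]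
  have hsum : ∫ x, ∑' n : ℕ, (z * e x) ^ n ∂μ = cauchyIntegral μ z := by
    refine integral_congr_ae (.of_forall fun x => ?_)
    have hzx : ‖z * e x‖ < 1 := by rwa [norm_mul, norm_cexp_neg_two_pi_I_mul, mul_one]
    exact tsum_geometric_of_norm_lt_one hzx
  simpa only [hterm, hsum] using H

theorem cauchyIntegral_zero [IsProbabilityMeasure μ] : cauchyIntegral μ 0 = 1 := by
  simp [cauchyIntegral]

theorem one_half_le_re_cauchyIntegral [IsProbabilityMeasure μ] {z : ℂ} (hz : ‖z‖ < 1) :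
    1 / 2 ≤ (cauchyIntegral μ z).re := by
  have hzx : ∀ x : ℝ, ‖z * cexp (-(2 * Real.pi * I * x))‖ < 1 := fun x => by
    rwa [norm_mul, norm_cexp_neg_two_pi_I_mul, mul_one]
  have hint : Integrable (fun x : ℝ => (1 - z * cexp (-(2 * Real.pi * I * x)))⁻¹) μ := by
    refine .of_bound (by fun_prop) (1 - ‖z‖)⁻¹ (.of_forall fun x => ?_)
    have h := norm_sub_norm_le 1 (z * cexp (-(2 * Real.pi * I * x)))
    rw [norm_one, norm_mul, norm_cexp_neg_two_pi_I_mul, mul_one] at h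
    rw [norm_inv]
    exact inv_anti₀ (sub_pos.2 hz) h
  calc (1 / 2 : ℝ) = ∫ _, 1 / 2 ∂μ := by simp
    _ ≤ ∫ x, ((1 - z * cexp (-(2 * Real.pi * I * x)))⁻¹).re ∂μ :=
      integral_mono (integrable_const _) hint.re fun x => one_half_le_re_inv_one_sub (hzx x)
    _ = (cauchyIntegral μ z).re := integral_re hint

theorem cauchyIntegral_ne_zero [IsProbabilityMeasure μ] {z : ℂ} (hz : ‖z‖ < 1) :
    cauchyIntegral μ z ≠ 0 := fun h => by
  have := one_half_le_re_cauchyIntegral μ hz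
  rw [h, zero_re] at this
  norm_num at this

theorem hasFPowerSeriesOnBall_inv_cauchyIntegral [IsProbabilityMeasure μ] :
    HasFPowerSeriesOnBall (fun z => (cauchyIntegral μ z)⁻¹)
      (ofScalars ℂ fun n => ∑ c : Composition n,
        (-1) ^ c.length * ∏ i, fourierStieltjes μ (c.blocksFun i)) 0 1 := by
  have hF : HasFPowerSeriesOnBall (cauchyIntegral μ)
      (ofScalars ℂ fun n : ℕ => fourierStieltjes μ n) 0 1 :=
    hasFPowerSeriesOnBall_ofScalars_of_hasSum one_pos fun z hz =>
      hasSum_cauchyIntegral μ (by exact_mod_cast hz)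
  have hinv : HasFPowerSeriesAt (·⁻¹) (alternatingGeometricSeries ℂ ℂ) (cauchyIntegral μ 0) := by
    rw [cauchyIntegral_zero]
    exact hasFPowerSeriesAt_inv_one
  have hcomp := hinv.comp hF.hasFPowerSeriesAt
  rw [alternatingGeometricSeries, ofScalars_comp_ofScalars] at hcomp
  refine hcomp.hasFPowerSeriesOnBall_of_differentiableOn one_pos fun z hz => ?_
  rw [mem_ball_zero_iff, NNReal.coe_one] at hz
  have hFz : DifferentiableAt ℂ (cauchyIntegral μ) z :=
    hF.differentiableOn.differentiableAt (isOpen_eball.mem_nhds (by simpa [← ofReal_norm] using hz))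
  exact (hFz.inv (cauchyIntegral_ne_zero μ hz)).differentiableWithinAt

end

theorem cauchy_integral_reciprocal_series_general
    (μ : Measure ℝ) [IsProbabilityMeasure μ]
    (μhat : ℝ → ℂ)
    (hμhat : ∀ x : ℝ, μhat x = ∫ y, Complex.exp (-(2 * Real.pi * Complex.I * x * y)) ∂μ)
    (α : ℕ → ℂ)
    (hα0 : α 0 = 1)
    (hα : ∀ n : ℕ, 0 < n → α n = ∑ p : Composition n,
      (-1 : ℂ) ^ p.length * (p.blocks.map fun q => μhat (q : ℝ)).prod)
    (F : ℂ → ℂ)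
    (hF : ∀ z : ℂ, F z =
      ∫ x, (1 - z * Complex.exp (-(2 * Real.pi * Complex.I * x)))⁻¹ ∂μ) :
    ∀ z : ℂ, ‖z‖ < 1 → F z ≠ 0 ∧ HasSum (fun n : ℕ => α n * z ^ n) (F z)⁻¹ := by
  obtain rfl : μhat = fourierStieltjes μ := funext hμhat
  obtain rfl : F = cauchyIntegral μ := funext hF
  have hα' : ∀ n, α n = ∑ c : Composition n,
      (-1) ^ c.length * ∏ i, fourierStieltjes μ (c.blocksFun i) := by
    rintro (_ | n)
    · simp [hα0, Fintype.sum_subsingleton _ (Composition.ones 0)]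
    -- `(q : ℝ)` in `hα` coerces the whole list `p.blocks` to `List ℝ`, a `flatMap` for `simp`
    · simp [hα _ n.succ_pos, Composition.blocksFun, ← List.map_eq_flatMap,
        Fin.prod_univ_fun_getElem _ fun a : ℕ => fourierStieltjes μ a, Function.comp_def]
  intro z hz
  refine ⟨cauchyIntegral_ne_zero μ hz, ?_⟩
  have hsum := (hasFPowerSeriesOnBall_inv_cauchyIntegral μ).hasSum (y := z)
    (by simpa [← ofReal_norm] using hz)
  simpa [hα', mul_comm] using hsum

/-- Let `μ` be a Borel probability measure on `[0,1)` with Cauchy integral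
`F(z) = ∫₀¹ 1/(1 - z e^{-2πix}) dμ(x)` and composition-sum coefficients `α_0 = 1`,
`α_n = Σ_{p ∈ P_n} (-1)^{l(p)} Π_j μ̂(p_j)`.  Then for every `z` in the open unit disk,
`F(z) ≠ 0` and `1/F(z) = Σ_{n=0}^∞ α_n zⁿ`. -/
theorem cauchy_integral_reciprocal_series
    (μ : Measure ℝ) [IsProbabilityMeasure μ]
    (hsupp : μ (Set.Ico (0 : ℝ) 1)ᶜ = 0)
    (μhat : ℝ → ℂ)
    (hμhat : ∀ x : ℝ, μhat x = ∫ y, Complex.exp (-(2 * Real.pi * Complex.I * x * y)) ∂μ)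
    (α : ℕ → ℂ)
    (hα0 : α 0 = 1)
    (hα : ∀ n : ℕ, 0 < n → α n = ∑ p : Composition n,
      (-1 : ℂ) ^ p.length * (p.blocks.map fun q => μhat (q : ℝ)).prod)
    (F : ℂ → ℂ)
    (hF : ∀ z : ℂ, F z =
      ∫ x, (1 - z * Complex.exp (-(2 * Real.pi * Complex.I * x)))⁻¹ ∂μ) :
    ∀ z : ℂ, ‖z‖ < 1 → F z ≠ 0 ∧ HasSum (fun n : ℕ => α n * z ^ n) (F z)⁻¹ :=
  cauchy_integral_reciprocal_series_general μ μhat hμhat α hα0 hα F hF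
end
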